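/- arXiv:math/9608205 — 3 statements merged into one kernel-verified Lean document; each statement's English description precedes it below -/
import Mathlib

section
/- If S is a family of subsets of a finite set I with |S| > Σ_{i<k} C(|I|, i), then there exist elements α_0, ..., α_{k-1} ∈ I such that for every w ⊆ {0,...,k-1} there is a set A_w ∈ S with α_i ∈ A_w ⟺ i ∈ w (i.e., S shatters a k-element subset of I). -/
/-- Sauer–Shelah lemma: a family of subsets of a finite set `I` whose size exceeds
`∑_{i<k} C(|I|, i)` shatters some `k`-element subset of `I`. -/
theorem stmt_0 {α : Type*} [DecidableEq α] (I : Finset α) (k : ℕ)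
    (S : Finset (Finset α)) (hS : ∀ A ∈ S, A ⊆ I)
    (hcard : ∑ i ∈ Finset.range k, I.card.choose i < S.card) :
    ∃ a : Fin k → α, Function.Injective a ∧ (∀ i, a i ∈ I) ∧
      ∀ w : Finset (Fin k), ∃ A ∈ S, ∀ i, a i ∈ A ↔ i ∈ w := by
  classical
  -- There exists a shattered set of size exactly k.
  have hsh : ∃ s : Finset α, s ⊆ I ∧ s.card = k ∧ S.Shatters s := by
    by_contra h
    push_neg at h
    -- every shattered set is a subset of I of card < k
    have hsub : S.shatterer ⊆ (Finset.range k).biUnion (fun i => I.powersetCard i) := by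
      intro s hs
      rw [Finset.mem_shatterer] at hs
      obtain ⟨t, ht, hst⟩ := hs.exists_superset
      have hsI : s ⊆ I := hst.trans (hS t ht)
      have hlt : s.card < k := by
        rcases lt_or_ge s.card k with h' | h'
        · exact h'
        · obtain ⟨u, hu, hcard'⟩ := Finset.exists_subset_card_eq h'
          exact absurd (hs.mono_right hu) (fun hsh' => (h u (hu.trans hsI) hcard' hsh'))
      simp only [Finset.mem_biUnion, Finset.mem_range, Finset.mem_powersetCard]
      exact ⟨s.card, hlt, hsI, rfl⟩
    have h1 := Finset.card_le_card_shatterer S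
    have h2 : S.shatterer.card ≤ ∑ i ∈ Finset.range k, I.card.choose i := by
      calc S.shatterer.card ≤ ((Finset.range k).biUnion (fun i => I.powersetCard i)).card :=
            Finset.card_le_card hsub
        _ ≤ ∑ i ∈ Finset.range k, (I.powersetCard i).card := Finset.card_biUnion_le
        _ = ∑ i ∈ Finset.range k, I.card.choose i := by
            simp [Finset.card_powersetCard]
    omega
  obtain ⟨s, hsI, hsk, hsh⟩ := hsh
  -- enumerate s
  let e : Fin k ≃ {x // x ∈ s} := (s.equivFin.trans (finCongr hsk)).symm
  refine ⟨fun i => (e i : α), ?_, ?_, ?_⟩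
  · intro i j hij
    exact e.injective (Subtype.ext hij)
  · intro i; exact hsI (e i).2
  · intro w
    have hsub : w.image (fun i => (e i : α)) ⊆ s := by
      intro x hx
      simp only [Finset.mem_image] at hx
      obtain ⟨i, _, rfl⟩ := hx
      exact (e i).2
    obtain ⟨A, hA, hAs⟩ := hsh hsub
    refine ⟨A, hA, fun i => ?_⟩
    constructor
    · intro hi
      have : (e i : α) ∈ s ∩ A := Finset.mem_inter.2 ⟨(e i).2, hi⟩
      rw [hAs] at this
      simp only [Finset.mem_image] at this
      obtain ⟨j, hj, hji⟩ := this
      have : j = i := e.injective (Subtype.ext hji)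
      rwa [this] at hj
    · intro hi
      have : (e i : α) ∈ w.image (fun i => (e i : α)) :=
        Finset.mem_image.2 ⟨i, hi, rfl⟩
      rw [← hAs] at this
      exact (Finset.mem_inter.1 this).2
end

section
/- For all natural numbers n and m, if n ≥ (1/2)·C(2m, m) then 2n → (m+1)²₂, i.e., every 2-coloring of the 2-element subsets of a set of size 2n admits a monochromatic subset of size m+1. -/
/-- `x → (y)²₂`: every 2-coloring of the 2-element subsets of a set of size `x`
admits a subset of size `y` all of whose 2-element subsets get the same color. -/
def arrowPairs (x y : ℕ) : Prop :=
  ∀ f : Finset (Fin x) → Fin 2, ∃ S : Finset (Fin x), ∃ c : Fin 2,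
    S.card = y ∧ ∀ p ⊆ S, p.card = 2 → f p = c

lemma mono_singleton {x : ℕ} (v : Fin x) (f : Finset (Fin x) → Fin 2) (c : Fin 2) :
    ∀ p ⊆ ({v} : Finset (Fin x)), p.card = 2 → f p = c := by
  intro p hp hcard
  have := Finset.card_le_card hp
  simp [Finset.card_singleton] at this
  omega

lemma ramsey_aux : ∀ (k a b x : ℕ) (f : Finset (Fin x) → Fin 2) (V : Finset (Fin x)),
    a + b ≤ k → Nat.choose (a + b) a ≤ V.card →
    ∃ S, S ⊆ V ∧ ((S.card = a + 1 ∧ ∀ p ⊆ S, p.card = 2 → f p = 0) ∨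
      (S.card = b + 1 ∧ ∀ p ⊆ S, p.card = 2 → f p = 1)) := by
  intro k
  induction k with
  | zero =>
    intro a b x f V hab hV
    have ha : a = 0 := by omega
    have hb : b = 0 := by omega
    subst ha; subst hb
    simp only [Nat.choose_self] at hV
    obtain ⟨v, hv⟩ := Finset.card_pos.mp (show 0 < V.card by omega)
    exact ⟨{v}, Finset.singleton_subset_iff.mpr hv,
      Or.inl ⟨rfl, mono_singleton v f 0⟩⟩
  | succ k ih =>
    intro a b x f V hab hV
    match a, b with
    | 0, b =>
      have : Nat.choose (0 + b) 0 = 1 := Nat.choose_zero_right _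
      rw [this] at hV
      obtain ⟨v, hv⟩ := Finset.card_pos.mp (show 0 < V.card by omega)
      exact ⟨{v}, Finset.singleton_subset_iff.mpr hv,
        Or.inl ⟨rfl, mono_singleton v f 0⟩⟩
    | a + 1, 0 =>
      have : Nat.choose (a + 1 + 0) (a + 1) = 1 := by simp
      rw [this] at hV
      obtain ⟨v, hv⟩ := Finset.card_pos.mp (show 0 < V.card by omega)
      exact ⟨{v}, Finset.singleton_subset_iff.mpr hv,
        Or.inr ⟨rfl, mono_singleton v f 1⟩⟩
    | a + 1, b + 1 =>
      have hVpos : 1 ≤ V.card :=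
        le_trans (Nat.choose_pos (show a + 1 ≤ a + 1 + (b + 1) by omega)) hV
      obtain ⟨v, hv⟩ := Finset.card_pos.mp (show 0 < V.card by omega)
      set W := V.erase v with hW
      set N0 := W.filter (fun u => f (insert v {u}) = 0) with hN0
      set N1 := W.filter (fun u => f (insert v {u}) ≠ 0) with hN1
      have hsplit : N0.card + N1.card = W.card := by
        rw [hN0, hN1]
        exact Finset.card_filter_add_card_filter_not _
      have hWcard : W.card = V.card - 1 := Finset.card_erase_of_mem hv
      have hpascal : Nat.choose (a + 1 + (b + 1)) (a + 1) =
          Nat.choose (a + (b + 1)) a + Nat.choose (a + (b + 1)) (a + 1) := by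
        have := Nat.choose_succ_succ (a + (b + 1)) a
        convert this using 2 <;> omega
      have hcases : Nat.choose (a + (b + 1)) a ≤ N0.card ∨
          Nat.choose (a + 1 + b) (a + 1) ≤ N1.card := by
        by_contra hc
        push_neg at hc
        have e : a + 1 + b = a + (b + 1) := by omega
        rw [e] at hc
        omega
      -- helper facts
      have hN0W : N0 ⊆ W := Finset.filter_subset _ _
      have hN1W : N1 ⊆ W := Finset.filter_subset _ _
      have hWV : W ⊆ V := Finset.erase_subset _ _
      rcases hcases with hc0 | hc1
      · obtain ⟨S, hSV, hS⟩ := ih a (b + 1) x f N0 (by omega) hc0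
        rcases hS with ⟨hcard, hmono⟩ | ⟨hcard, hmono⟩
        · -- extend with v
          have hvS : v ∉ S := fun hvS =>
            Finset.notMem_erase v V (hN0W (hSV hvS))
          refine ⟨insert v S, ?_, Or.inl ⟨?_, ?_⟩⟩
          · intro u hu
            rcases Finset.mem_insert.mp hu with rfl | hu
            · exact hv
            · exact hWV (hN0W (hSV hu))
          · rw [Finset.card_insert_of_notMem hvS, hcard]
          · intro p hp hpcard
            by_cases hvp : v ∈ p
            · -- p = {v, u} with u ∈ S
              have h1 : (p.erase v).card = 1 := by
                rw [Finset.card_erase_of_mem hvp, hpcard]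
              obtain ⟨u, hu⟩ := Finset.card_eq_one.mp h1
              have hup : u ∈ p.erase v := hu ▸ Finset.mem_singleton_self u
              have huS : u ∈ S := by
                have := hp (Finset.mem_of_mem_erase hup)
                rcases Finset.mem_insert.mp this with rfl | h
                · exact absurd rfl (Finset.ne_of_mem_erase hup)
                · exact h
              have hpu : p = insert v {u} := by
                rw [← hu, Finset.insert_erase hvp]
              rw [hpu]
              have := hSV huS
              rw [hN0] at this
              exact (Finset.mem_filter.mp this).2
            · exact hmono p (fun u hu => by
                rcases Finset.mem_insert.mp (hp hu) with rfl | h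
                · exact absurd hu hvp
                · exact h) hpcard
        · exact ⟨S, hSV.trans (hN0W.trans hWV), Or.inr ⟨hcard, hmono⟩⟩
      · obtain ⟨S, hSV, hS⟩ := ih (a + 1) b x f N1 (by omega) hc1
        rcases hS with ⟨hcard, hmono⟩ | ⟨hcard, hmono⟩
        · exact ⟨S, hSV.trans (hN1W.trans hWV), Or.inl ⟨hcard, hmono⟩⟩
        · have hvS : v ∉ S := fun hvS =>
            Finset.notMem_erase v V (hN1W (hSV hvS))
          refine ⟨insert v S, ?_, Or.inr ⟨?_, ?_⟩⟩
          · intro u hu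
            rcases Finset.mem_insert.mp hu with rfl | hu
            · exact hv
            · exact hWV (hN1W (hSV hu))
          · rw [Finset.card_insert_of_notMem hvS, hcard]
          · intro p hp hpcard
            by_cases hvp : v ∈ p
            · have h1 : (p.erase v).card = 1 := by
                rw [Finset.card_erase_of_mem hvp, hpcard]
              obtain ⟨u, hu⟩ := Finset.card_eq_one.mp h1
              have hup : u ∈ p.erase v := hu ▸ Finset.mem_singleton_self u
              have huS : u ∈ S := by
                have := hp (Finset.mem_of_mem_erase hup)
                rcases Finset.mem_insert.mp this with rfl | h
                · exact absurd rfl (Finset.ne_of_mem_erase hup)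
                · exact h
              have hpu : p = insert v {u} := by
                rw [← hu, Finset.insert_erase hvp]
              rw [hpu]
              have := hSV huS
              rw [hN1] at this
              have hne := (Finset.mem_filter.mp this).2
              omega
            · exact hmono p (fun u hu => by
                rcases Finset.mem_insert.mp (hp hu) with rfl | h
                · exact absurd hu hvp
                · exact h) hpcard

/-- If `n ≥ (1/2)·C(2m,m)` then `2n → (m+1)²₂`. -/
theorem stmt_1 (n m : ℕ) (h : Nat.choose (2 * m) m ≤ 2 * n) :
    arrowPairs (2 * n) (m + 1) := by
  intro f
  have h2 : Nat.choose (m + m) m ≤ (Finset.univ : Finset (Fin (2 * n))).card := by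
    rw [Finset.card_univ, Fintype.card_fin]
    have : m + m = 2 * m := by omega
    rw [this]; exact h
  obtain ⟨S, _, hS⟩ := ramsey_aux (m + m) m m (2 * n) f Finset.univ le_rfl h2
  rcases hS with ⟨hcard, hmono⟩ | ⟨hcard, hmono⟩
  · exact ⟨S, 0, hcard, hmono⟩
  · exact ⟨S, 1, hcard, hmono⟩
end

section
/- Let M be an L-structure and φ(x;y) ∈ L(M) with r = l(x), s = l(y), t = max{r,s}. If the formula ρ(x₀,x₁,x₂; y₀,y₁,y₂) := (φ(x₀;y₁) ↔ φ(x₀;y₂)) does not have the n-order property in M, then for every finite A ⊆ M with |A| ≥ 2, the number of φ-types over A realized in M satisfies |S_φ(A,M)| ≤ 2n·|A|^k where k = 2^{(3ns)^{t+1}}. -/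
/-!
Fix a tuple `e`. The `φ`-type of `x` over `A` is recovered from the truth value of `φ(x;e)`
and the trace `{y ∈ Aˢ | φ(x;y) ↔ φ(x;e)}`, so there are at most twice as many `φ`-types as
such traces. If the family of traces shattered `n` tuples `y₀, …, yₙ₋₁`, the "ladder" subsets
`{y_j | i < j}` would be cut out by some `cᵢ`, and `(cᵢ; yⱼ, e)` would witness the `n`-order
property of `ρ`. Hence the traces have VC dimension `< n`, and the Sauer–Shelah lemma bounds
their number by `n · |Aˢ|^(n-1)`; the exponent `s (n - 1)` is far below `k`.
-/

open Finset

namespace Finset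

variable {α : Type*} [DecidableEq α] {𝒜 : Finset (Finset α)} {B t : Finset α} {n : ℕ}

theorem card_le_sum_choose_of_shatters_card_lt (h𝒜 : ∀ a ∈ 𝒜, a ⊆ B)
    (hn : ∀ t, 𝒜.Shatters t → #t < n) : #𝒜 ≤ ∑ k ∈ range n, (#B).choose k :=
  calc #𝒜 ≤ #𝒜.shatterer := card_le_card_shatterer 𝒜
    _ ≤ #((range n).biUnion (B.powersetCard ·)) := by
      refine card_le_card fun t ht => mem_biUnion.2 ⟨#t, ?_, ?_⟩
      · exact mem_range.2 (hn t (mem_shatterer.1 ht))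
      · obtain ⟨a, ha, hta⟩ := (mem_shatterer.1 ht).exists_superset
        exact mem_powersetCard.2 ⟨hta.trans (h𝒜 a ha), rfl⟩
    _ ≤ ∑ k ∈ range n, #(B.powersetCard k) := card_biUnion_le
    _ = ∑ k ∈ range n, (#B).choose k := by simp only [card_powersetCard]

theorem Shatters.exists_ladder (hs : 𝒜.Shatters t) (ht : #t = n) :
    ∃ (a : Fin n → α) (F : Fin n → Finset α),
      (∀ j, a j ∈ t) ∧ (∀ i, F i ∈ 𝒜) ∧ ∀ i j, a j ∈ F i ↔ i < j := by
  let e := t.equivFinOfCardEq ht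
  let a : Fin n → α := fun j => e.symm j
  have ha : Function.Injective a := Subtype.val_injective.comp e.symm.injective
  have hat : ∀ j, a j ∈ t := fun j => (e.symm j).2
  have hladder : ∀ i, ∃ F ∈ 𝒜, t ∩ F = ({j | i < j} : Finset (Fin n)).image a := fun i =>
    hs fun _ hy => by
      obtain ⟨j, -, rfl⟩ := mem_image.1 hy
      exact hat j
  choose F hF𝒜 hFt using hladder
  refine ⟨a, F, hat, hF𝒜, fun i j => ?_⟩
  simpa [hat j, ha.mem_finset_image] using congrArg (a j ∈ ·) (hFt i)

end Finset

theorem Nat.sum_range_choose_le_mul_pow {m : ℕ} (hm : 1 ≤ m) (n : ℕ) :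
    ∑ k ∈ range n, m.choose k ≤ n * m ^ (n - 1) :=
  calc ∑ k ∈ range n, m.choose k ≤ ∑ _k ∈ range n, m ^ (n - 1) := by
        refine sum_le_sum fun k hk => (Nat.choose_le_pow m k).trans ?_
        exact Nat.pow_le_pow_right hm (by grind)
    _ = n * m ^ (n - 1) := by simp

section Traces

variable {X Y : Type*} (R : X → Y → Prop) (B : Finset Y)

open Classical in
noncomputable def traceFamily : Finset (Finset Y) :=
  {F ∈ B.powerset | ∃ x, F = {y ∈ B | R x y}}

variable {R B}

theorem mem_traceFamily {F : Finset Y} :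
    F ∈ traceFamily R B ↔ ∃ x, ∀ y, y ∈ F ↔ y ∈ B ∧ R x y := by
  classical
  simp only [traceFamily, mem_filter, mem_powerset, Finset.ext_iff]
  exact ⟨fun h => h.2, fun ⟨x, hx⟩ => ⟨fun y hy => ((hx y).1 hy).1, x, hx⟩⟩

theorem subset_of_mem_traceFamily {F : Finset Y} (hF : F ∈ traceFamily R B) : F ⊆ B :=
  fun y hy => (mem_traceFamily.1 hF).elim fun _ hx => ((hx y).1 hy).1

theorem ncard_setOf_eq_card_traceFamily :
    {p : Set Y | ∃ x, p = {y | y ∈ B ∧ R x y}}.ncard = #(traceFamily R B) := by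
  rw [← Set.ncard_coe_finset, ← Set.ncard_image_of_injective _ Finset.coe_injective]
  congr 1
  ext p
  classical
  simp only [Set.mem_ofPred_eq, Set.mem_image, mem_coe, mem_traceFamily]
  constructor
  · rintro ⟨x, rfl⟩
    exact ⟨{y ∈ B | R x y}, ⟨x, fun y => mem_filter⟩, by ext; simp⟩
  · rintro ⟨F, ⟨x, hx⟩, rfl⟩
    exact ⟨x, Set.ext hx⟩

theorem card_traceFamily_le_two_mul (e : Y) :
    #(traceFamily R B) ≤ 2 * #(traceFamily (fun x y => R x y ↔ R x e) B) := by
  classical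
  set 𝒢 := traceFamily (fun x y => R x y ↔ R x e) B
  have hsub : traceFamily R B ⊆ 𝒢 ∪ 𝒢.image (B \ ·) := by
    intro F hF
    obtain ⟨x, hx⟩ := mem_traceFamily.1 hF
    have hG : {y ∈ B | R x y ↔ R x e} ∈ 𝒢 := mem_traceFamily.2 ⟨x, fun y => mem_filter⟩
    by_cases hxe : R x e
    · refine mem_union_left _ (mem_traceFamily.2 ⟨x, fun y => ?_⟩)
      simp [hx, hxe]
    · refine mem_union_right _ (mem_image.2 ⟨_, hG, ?_⟩)
      ext y
      simp +contextual [hx, hxe]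
  calc #(traceFamily R B) ≤ #𝒢 + #(𝒢.image (B \ ·)) :=
        (card_le_card hsub).trans (card_union_le _ _)
    _ ≤ 2 * #𝒢 := by grind [card_image_le]

theorem exists_order_of_shatters [DecidableEq Y] {t : Finset Y} {n : ℕ}
    (hs : (traceFamily R B).Shatters t) (hn : n ≤ #t) :
    ∃ (c : Fin n → X) (a : Fin n → Y), ∀ i j, R (c i) (a j) ↔ i < j := by
  obtain ⟨t', ht't, rfl⟩ := exists_subset_card_eq hn
  obtain ⟨a, F, hat, hF, hladder⟩ := (hs.mono_right ht't).exists_ladder rfl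
  choose c hc using fun i => mem_traceFamily.1 (hF i)
  obtain ⟨G, hG, htG⟩ := hs.exists_superset
  have haB j : a j ∈ B := subset_of_mem_traceFamily hG (htG (ht't (hat j)))
  exact ⟨c, a, fun i j => by rw [← hladder, hc, and_iff_right (haB j)]⟩

end Traces

/-- If `ρ(x₀,x₁,x₂;y₀,y₁,y₂) := (φ(x₀;y₁) ↔ φ(x₀;y₂))` does not have the `n`-order
property in `M`, then for every finite `A ⊆ M` with `|A| ≥ 2`, the number of `φ`-types
over `A` realized in `M` is at most `2n·|A|^k` with `k = 2^{(3ns)^{t+1}}`, `t = max r s`. -/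
theorem stmt_14 {M : Type*} (r s n : ℕ)
    (Phi : (Fin r → M) → (Fin s → M) → Prop)
    (hNOP : ¬ ∃ (c : Fin n → (Fin r → M)) (a b : Fin n → (Fin s → M)),
      ∀ i j : Fin n, ((Phi (c i) (a j) ↔ Phi (c i) (b j)) ↔ i < j))
    (A : Finset M) (hA : 2 ≤ A.card) :
    Set.ncard {p : Set (Fin s → M) | ∃ x : Fin r → M,
      p = {y | (∀ l, y l ∈ A) ∧ Phi x y}} ≤
        2 * n * A.card ^ (2 ^ ((3 * n * s) ^ (max r s + 1))) := by
  classical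
  set B := Fintype.piFinset fun _ : Fin s => A
  obtain ⟨a₀, -⟩ : A.Nonempty := card_pos.1 (by omega)
  let e : Fin s → M := fun _ => a₀
  have hB : #B = #A ^ s := by simp [B]
  have hdim : ∀ t, (traceFamily (fun x y => Phi x y ↔ Phi x e) B).Shatters t → #t < n :=
    fun t ht => by
      by_contra! hnt
      obtain ⟨c, a, h⟩ := exists_order_of_shatters ht hnt
      exact hNOP ⟨c, a, fun _ => e, h⟩
  have hexp : s * (n - 1) ≤ 2 ^ ((3 * n * s) ^ (max r s + 1)) :=
    calc s * (n - 1) ≤ 3 * n * s := by nlinarith [Nat.sub_le n 1]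
      _ ≤ (3 * n * s) ^ (max r s + 1) := Nat.le_self_pow (Nat.succ_ne_zero _) _
      _ ≤ 2 ^ ((3 * n * s) ^ (max r s + 1)) := Nat.lt_two_pow_self.le
  calc _ = #(traceFamily Phi B) := by
        simpa only [B, Fintype.mem_piFinset] using
          ncard_setOf_eq_card_traceFamily (R := Phi) (B := B)
    _ ≤ 2 * #(traceFamily (fun x y => Phi x y ↔ Phi x e) B) := card_traceFamily_le_two_mul e
    _ ≤ 2 * (n * #B ^ (n - 1)) := by
        gcongr
        refine (card_le_sum_choose_of_shatters_card_lt (B := B)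
          (fun _ => subset_of_mem_traceFamily) hdim).trans ?_
        exact Nat.sum_range_choose_le_mul_pow (by rw [hB]; exact Nat.one_le_pow _ _ (by omega)) n
    _ = 2 * n * #A ^ (s * (n - 1)) := by rw [hB, ← pow_mul]; ring
    _ ≤ _ := by gcongr; omega
end
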